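/- For every partition μ and every nonnegative integer n, Σ_{|λ/μ|=n} f_{λ/μ} / H_λ = 1/H_μ, where the sum ranges over all partitions λ containing μ with |λ| − |μ| = n. -/

import Mathlib

/-!
Adding a box to `μ` at the end of row `k` raises by one exactly the hooks in row `k` and in the
column of the new box. In terms of the beta numbers `b_i = μ_i + (ℓ - i)`, `0 ≤ i ≤ ℓ`, where `ℓ`
is the number of rows, the hooks in row `k` are `{1, …, b_k} \ {b_k - b_i : i > k}` and those
above the new box are `b_i - b_k - 1`, `i < k`; the products telescope to
`H_μ / H_{μ + □} = (b_k + 1)⁻¹ ∏_{i ≠ k} (b_k + 1 - b_i) / (b_k - b_i)`.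
This expression vanishes when row `k` has no addable cell (then `b_{k-1} = b_k + 1`), and, as
`b_ℓ = 0`, its sum over all `k` is the Lagrange-interpolation formula at the `ℓ + 1` nodes `b_i` for
the leading coefficient `1` of the monic polynomial `∏_{i ≠ ℓ} (X + 1 - b_i)`. Hence
`Σ_{μ⁺} 1 / H_{μ⁺} = 1 / H_μ`, and the theorem follows by induction on `n`, since `f_{λ/μ}` counts
the chains of one-box additions from `μ` to `λ`.
-/

open scoped Classical

namespace HookDiff

/-- The hook length of the box `c` in the Young diagram `μ`: the number of boxes
directly to its right, directly below/above it in its column, plus the box itself. -/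
def hook (μ : YoungDiagram) (c : ℕ × ℕ) : ℕ :=
  (μ.cells.filter (fun d => (d.1 = c.1 ∧ c.2 ≤ d.2) ∨ (d.2 = c.2 ∧ c.1 ≤ d.1))).card

/-- `H μ` is the product of all hook lengths of `μ`. -/
def H (μ : YoungDiagram) : ℚ := ∏ c ∈ μ.cells, (hook μ c : ℚ)

/-- The cells that can be added to `μ` to produce a Young diagram (inner corners). -/
noncomputable def addables (μ : YoungDiagram) : Finset (ℕ × ℕ) :=
  (Finset.range (μ.card + 1) ×ˢ Finset.range (μ.card + 1)).filter
    (fun c => c ∉ μ ∧ IsLowerSet (↑(insert c μ.cells) : Set (ℕ × ℕ)))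

/-- Add a box at cell `c` to `μ` (junk value `μ` if the result is not a diagram). -/
noncomputable def addBox (μ : YoungDiagram) (c : ℕ × ℕ) : YoungDiagram :=
  if h : IsLowerSet (↑(insert c μ.cells) : Set (ℕ × ℕ)) then ⟨insert c μ.cells, h⟩ else μ

/-- The cells that can be removed from `μ` leaving a Young diagram (outer corners). -/
noncomputable def removables (μ : YoungDiagram) : Finset (ℕ × ℕ) :=
  μ.cells.filter (fun c => IsLowerSet (↑(μ.cells.erase c) : Set (ℕ × ℕ)))

/-- Remove the box at cell `c` from `μ` (junk value `μ` if the result is not a diagram). -/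
noncomputable def removeBox (μ : YoungDiagram) (c : ℕ × ℕ) : YoungDiagram :=
  if h : IsLowerSet (↑(μ.cells.erase c) : Set (ℕ × ℕ)) then ⟨μ.cells.erase c, h⟩ else μ

/-- The difference operator `D`: `Dg(λ) = Σ_{λ⁺} g(λ⁺) − g(λ)`, where `λ⁺` runs over
all partitions obtained from `λ` by adding one box. -/
noncomputable def D (g : YoungDiagram → ℚ) : YoungDiagram → ℚ :=
  fun μ => (∑ c ∈ addables μ, g (addBox μ c)) - g μ

/-- The difference operator `D⁻`: `D⁻g(λ) = |λ|·g(λ) − Σ_{λ⁻} g(λ⁻)`, where `λ⁻` runs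
over all partitions obtained from `λ` by removing one box. -/
noncomputable def Dminus (g : YoungDiagram → ℚ) : YoungDiagram → ℚ :=
  fun μ => (μ.card : ℚ) * g μ - ∑ c ∈ removables μ, g (removeBox μ c)

/-- `fskew n μ λ` is the number of standard Young tableaux of skew shape `λ/μ`
(with `n = |λ| - |μ|`), i.e. the number of chains `μ = ν₀ ⊂ ν₁ ⊂ ⋯ ⊂ ν_n = λ`
in which each diagram is obtained from the previous one by adding a single box. -/
noncomputable def fskew : ℕ → YoungDiagram → YoungDiagram → ℕ
  | 0, μ, l => if μ = l then 1 else 0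
  | n + 1, μ, l => ∑ c ∈ addables μ, fskew n (addBox μ c) l

/-- `f_λ`, the number of standard Young tableaux of shape `λ`. -/
noncomputable def f (l : YoungDiagram) : ℕ := fskew l.card ⊥ l

/-- `S(λ, r) = Σ_{□∈λ} ∏_{j=1}^{r} (h_□² − j²)`. -/
def S (l : YoungDiagram) (r : ℕ) : ℚ :=
  ∑ c ∈ l.cells, ∏ j ∈ Finset.Icc 1 r, ((hook l c : ℚ) ^ 2 - (j : ℚ) ^ 2)

/-- `K_r = (2r)!·(2r+1)! / (r!·(r+1)!²)`. -/
def K (r : ℕ) : ℚ :=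
  ((2 * r).factorial : ℚ) * ((2 * r + 1).factorial : ℚ) /
    ((r.factorial : ℚ) * ((r + 1).factorial : ℚ) ^ 2)

/-- The content of the box `c = (i, j)` is `j - i`. -/
def content (c : ℕ × ℕ) : ℚ := (c.2 : ℚ) - (c.1 : ℚ)

/-- `C(λ, r) = Σ_{□∈λ} ∏_{j=0}^{r-1} (c_□² − j²)`. -/
def Ccont (l : YoungDiagram) (r : ℕ) : ℚ :=
  ∑ c ∈ l.cells, ∏ j ∈ Finset.range r, (content c ^ 2 - (j : ℚ) ^ 2)

end HookDiff

theorem IsLowerSet.insert_iff {α : Type*} [PartialOrder α] {s : Set α} (hs : IsLowerSet s)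
    {a : α} : IsLowerSet (insert a s) ↔ ∀ b < a, b ∈ s := by
  refine ⟨fun h b hb => ?_, fun h b c hcb hb => ?_⟩
  · exact (h hb.le (Set.mem_insert a s)).resolve_left hb.ne
  · rcases hb with rfl | hb
    · exact hcb.eq_or_lt.elim (fun h => h ▸ Set.mem_insert c s) fun hlt => Or.inr (h c hlt)
    · exact Or.inr (hs hcb hb)

namespace YoungDiagram

theorem rowLen_le_card (μ : YoungDiagram) (i : ℕ) : μ.rowLen i ≤ μ.card := by
  rw [rowLen_eq_card]
  exact Finset.card_le_card (Finset.filter_subset _ _)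

theorem colLen_le_card (μ : YoungDiagram) (j : ℕ) : μ.colLen j ≤ μ.card := by
  rw [colLen_eq_card]
  exact Finset.card_le_card (Finset.filter_subset _ _)

end YoungDiagram

open Finset Polynomial in
theorem Lagrange.sum_inv_add_one_mul_prod_div_eq_one {F ι : Type*} [Field F] [DecidableEq ι]
    {s : Finset ι} {v : ι → F} (hvs : Set.InjOn v s) {i₀ : ι} (hi₀ : i₀ ∈ s) (hv₀ : v i₀ = 0)
    (hv : ∀ i ∈ s, v i + 1 ≠ 0) :
    ∑ i ∈ s, (v i + 1)⁻¹ * ∏ j ∈ s.erase i, (v i + 1 - v j) / (v i - v j) = 1 := by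
  -- `Q = ∏ j ∈ s, (X + 1 - v j)` divided by its factor `X + 1 - v i₀ = X + 1`
  set Q : F[X] := ∏ j ∈ s.erase i₀, (X - C (v j - 1))
  have hQ : Q.Monic := monic_prod_of_monic _ _ fun j _ => monic_X_sub_C _
  have hQdeg : Q.natDegree = #s - 1 := by
    rw [natDegree_prod_of_monic _ _ fun j _ => monic_X_sub_C _]
    simp only [natDegree_X_sub_C, sum_const, card_erase_of_mem hi₀, smul_eq_mul, mul_one]
  have hlt : Q.degree < #s := by
    rw [degree_eq_natDegree hQ.ne_zero, hQdeg]
    exact_mod_cast Nat.sub_lt (card_pos.mpr ⟨i₀, hi₀⟩) one_pos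
  have key := Lagrange.coeff_eq_sum hvs hlt
  rw [← hQdeg, hQ.coeff_natDegree] at key
  refine (sum_congr rfl fun i hi => ?_).trans key.symm
  have hnum : ∏ j ∈ s.erase i, (v i + 1 - v j) = (v i + 1) * Q.eval (v i) := by
    have h := mul_prod_erase s (fun j => v i + 1 - v j) hi
    rw [← mul_prod_erase s _ hi₀, hv₀] at h
    rw [add_sub_cancel_left, one_mul, sub_zero] at h
    rw [h, eval_prod]
    congr 1
    exact prod_congr rfl fun j _ => by simp only [eval_sub, eval_X, eval_C]; ring
  rw [prod_div_distrib, ← mul_div_assoc, hnum, inv_mul_cancel_left₀ (hv i hi)]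

namespace HookDiff

open Finset YoungDiagram

variable {μ : YoungDiagram}

lemma hook_add_eq_rowLen_add_colLen {i j : ℕ} (h : (i, j) ∈ μ) :
    hook μ (i, j) + (i + j + 1) = μ.rowLen i + μ.colLen j := by
  have arm : μ.cells.filter (fun d => d.1 = i ∧ j ≤ d.2) = {i} ×ˢ Ico j (μ.rowLen i) := by
    ext ⟨a, b⟩
    simp only [mem_filter, mem_cells, mem_product, mem_singleton, mem_Ico]
    constructor
    · rintro ⟨hab, rfl, hb⟩
      exact ⟨rfl, hb, mem_iff_lt_rowLen.mp hab⟩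
    · rintro ⟨rfl, hb, hb'⟩
      exact ⟨mem_iff_lt_rowLen.mpr hb', rfl, hb⟩
  have leg : μ.cells.filter (fun d => d.2 = j ∧ i ≤ d.1) = Ico i (μ.colLen j) ×ˢ {j} := by
    ext ⟨a, b⟩
    simp only [mem_filter, mem_cells, mem_product, mem_singleton, mem_Ico]
    constructor
    · rintro ⟨hab, rfl, ha⟩
      exact ⟨⟨ha, mem_iff_lt_colLen.mp hab⟩, rfl⟩
    · rintro ⟨⟨ha, ha'⟩, rfl⟩
      exact ⟨mem_iff_lt_colLen.mpr ha', rfl, ha⟩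
  have corner : ({i} ×ˢ Ico j (μ.rowLen i)) ∩ (Ico i (μ.colLen j) ×ˢ {j}) = {(i, j)} := by
    ext ⟨a, b⟩
    simp only [mem_inter, mem_product, mem_singleton, mem_Ico, Prod.mk.injEq]
    have := mem_iff_lt_rowLen.mp h
    have := mem_iff_lt_colLen.mp h
    omega
  have hunion := card_union_add_card_inter ({i} ×ˢ Ico j (μ.rowLen i)) (Ico i (μ.colLen j) ×ˢ {j})
  rw [hook, filter_or, arm, leg]
  rw [corner, card_singleton, card_product, card_product, card_singleton, card_singleton,
    Nat.card_Ico, Nat.card_Ico] at hunion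
  have := mem_iff_lt_rowLen.mp h
  have := mem_iff_lt_colLen.mp h
  omega

lemma hook_pos {c : ℕ × ℕ} (hc : c ∈ μ) : 0 < hook μ c :=
  card_pos.mpr ⟨c, mem_filter.mpr ⟨(mem_cells c).mpr hc, Or.inl ⟨rfl, le_rfl⟩⟩⟩

lemma mem_addables_iff {c : ℕ × ℕ} :
    c ∈ addables μ ↔ μ.rowLen c.1 = c.2 ∧ μ.colLen c.2 = c.1 := by
  obtain ⟨k, m⟩ := c
  have hlow : IsLowerSet (μ.cells : Set (ℕ × ℕ)) := μ.isLowerSet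
  simp only [addables, mem_filter, mem_product, mem_range, coe_insert, hlow.insert_iff, mem_coe,
    mem_cells, mem_iff_lt_rowLen, not_lt]
  constructor
  · rintro ⟨-, hrow, hbelow⟩
    have hcol : μ.colLen m ≤ k := not_lt.mp fun h => (mem_iff_lt_rowLen.mp
      (mem_iff_lt_colLen.mpr h)).not_ge hrow
    refine ⟨le_antisymm hrow ?_, le_antisymm hcol ?_⟩
    · rcases Nat.eq_zero_or_pos m with rfl | hm
      · exact Nat.zero_le _
      · have := mem_iff_lt_rowLen.mp (hbelow (k, m - 1) (Prod.lt_of_le_of_lt le_rfl (by omega)))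
        omega
    · rcases Nat.eq_zero_or_pos k with rfl | hk
      · exact Nat.zero_le _
      · have := mem_iff_lt_colLen.mp (hbelow (k - 1, m) (Prod.lt_of_lt_of_le (by omega) le_rfl))
        omega
  · rintro ⟨hrow, hcol⟩
    refine ⟨⟨?_, ?_⟩, hrow.le, fun ⟨a, b⟩ hab => ?_⟩
    · have := colLen_le_card μ m; omega
    · have := rowLen_le_card μ k; omega
    rcases Prod.lt_iff.mp hab with ⟨ha, hb⟩ | ⟨ha, hb⟩
    · exact mem_iff_lt_colLen.mpr (hcol ▸ ha |>.trans_le (μ.colLen_anti _ _ hb))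
    · exact mem_iff_lt_rowLen.mpr (hrow ▸ hb |>.trans_le (μ.rowLen_anti _ _ ha))

lemma notMem_of_mem_addables {c : ℕ × ℕ} (hc : c ∈ addables μ) : c ∉ μ :=
  (mem_filter.mp hc).2.1

lemma addBox_cells {c : ℕ × ℕ} (hc : c ∈ addables μ) :
    (addBox μ c).cells = insert c μ.cells := by
  rw [addBox, dif_pos (mem_filter.mp hc).2.2]

lemma card_addBox {c : ℕ × ℕ} (hc : c ∈ addables μ) : (addBox μ c).card = μ.card + 1 := by
  rw [YoungDiagram.card, addBox_cells hc, card_insert_of_notMem (mt (mem_cells c).mp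
    (notMem_of_mem_addables hc))]

lemma le_addBox {c : ℕ × ℕ} (hc : c ∈ addables μ) : μ ≤ addBox μ c := by
  rw [← cells_subset_iff, addBox_cells hc]
  exact subset_insert _ _

lemma hook_addBox_self {c : ℕ × ℕ} (hc : c ∈ addables μ) : hook (addBox μ c) c = 1 := by
  obtain ⟨hrow, hcol⟩ := mem_addables_iff.mp hc
  rw [hook, addBox_cells hc, filter_insert, if_pos (Or.inl ⟨rfl, le_rfl⟩),
    filter_eq_empty_iff.mpr, insert_empty, card_singleton]
  rintro ⟨a, b⟩ hab (⟨rfl, hb⟩ | ⟨rfl, ha⟩)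
  · exact (mem_iff_lt_rowLen.mp ((mem_cells _).mp hab)).not_ge (hrow ▸ hb)
  · exact (mem_iff_lt_colLen.mp ((mem_cells _).mp hab)).not_ge (hcol ▸ ha)

lemma hook_addBox_of_mem {c d : ℕ × ℕ} (hc : c ∈ addables μ) (hd : d ∈ μ) :
    hook (addBox μ c) d = hook μ d + if d.1 = c.1 ∨ d.2 = c.2 then 1 else 0 := by
  obtain ⟨hrow, hcol⟩ := mem_addables_iff.mp hc
  have hd' : (d.1, d.2) ∈ μ := hd
  have hc_in_hook : ((c.1 = d.1 ∧ d.2 ≤ c.2) ∨ (c.2 = d.2 ∧ d.1 ≤ c.1)) ↔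
      (d.1 = c.1 ∨ d.2 = c.2) := by
    have := mem_iff_lt_rowLen.mp hd'
    have := mem_iff_lt_colLen.mp hd'
    constructor
    · rintro (⟨h, -⟩ | ⟨h, -⟩)
      exacts [Or.inl h.symm, Or.inr h.symm]
    · rintro (h | h)
      · exact Or.inl ⟨h.symm, by rw [← hrow, ← h]; omega⟩
      · exact Or.inr ⟨h.symm, by rw [← hcol, ← h]; omega⟩
  rw [hook, hook, addBox_cells hc, filter_insert]
  simp only [hc_in_hook]
  split_ifs
  · exact card_insert_of_notMem fun h => notMem_of_mem_addables hc ((mem_cells c).mp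
      (mem_filter.mp h).1)
  · rfl

lemma filter_row_or_col_eq {c : ℕ × ℕ} (hc : c ∈ addables μ) :
    μ.cells.filter (fun d => d.1 = c.1 ∨ d.2 = c.2) =
      ({c.1} ×ˢ range c.2) ∪ (range c.1 ×ˢ {c.2}) := by
  obtain ⟨hrow, hcol⟩ := mem_addables_iff.mp hc
  ext ⟨a, b⟩
  simp only [mem_filter, mem_cells, mem_union, mem_product, mem_singleton, mem_range]
  constructor
  · rintro ⟨hab, rfl | rfl⟩
    · exact Or.inl ⟨rfl, hrow ▸ mem_iff_lt_rowLen.mp hab⟩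
    · exact Or.inr ⟨hcol ▸ mem_iff_lt_colLen.mp hab, rfl⟩
  · rintro (⟨rfl, hb⟩ | ⟨ha, rfl⟩)
    · exact ⟨mem_iff_lt_rowLen.mpr (hrow ▸ hb), Or.inl rfl⟩
    · exact ⟨mem_iff_lt_colLen.mpr (hcol ▸ ha), Or.inr rfl⟩

lemma H_addBox {c : ℕ × ℕ} (hc : c ∈ addables μ) :
    H (addBox μ c) = H μ
      * (∏ j ∈ range c.2, ((hook μ (c.1, j) : ℚ) + 1) / hook μ (c.1, j))
      * ∏ i ∈ range c.1, ((hook μ (i, c.2) : ℚ) + 1) / hook μ (i, c.2) := by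
  have hcell : ∀ d ∈ μ.cells, (hook (addBox μ c) d : ℚ) =
      hook μ d * if d.1 = c.1 ∨ d.2 = c.2 then ((hook μ d : ℚ) + 1) / hook μ d else 1 := by
    intro d hd
    have hpos : (hook μ d : ℚ) ≠ 0 := by exact_mod_cast (hook_pos ((mem_cells d).mp hd)).ne'
    rw [hook_addBox_of_mem hc ((mem_cells d).mp hd)]
    split_ifs
    · push_cast; field_simp
    · simp
  have hdisj : Disjoint ({c.1} ×ˢ range c.2) (range c.1 ×ˢ {c.2}) := by
    simp only [disjoint_left, mem_product, mem_singleton, mem_range]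
    rintro ⟨a, b⟩ ⟨rfl, -⟩ ⟨h, -⟩
    exact h.false
  rw [H, addBox_cells hc, prod_insert (mt (mem_cells c).mp (notMem_of_mem_addables hc)),
    hook_addBox_self hc, Nat.cast_one, one_mul, prod_congr rfl hcell, prod_mul_distrib, ← H,
    ← prod_filter, filter_row_or_col_eq hc, prod_union hdisj, prod_product, prod_product_right,
    prod_singleton, prod_singleton, mul_assoc]

/-- Beta numbers of the rows `0, …, μ.colLen 0`; the last row is empty and has beta number `0`. -/
def beta (μ : YoungDiagram) (k : ℕ) : ℕ := μ.rowLen k + (μ.colLen 0 - k)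

/-- The numbers `betaGap μ j` enumerate the complement of the beta numbers in increasing order. -/
def betaGap (μ : YoungDiagram) (j : ℕ) : ℕ := μ.colLen 0 + 1 + j - μ.colLen j

lemma beta_colLen_zero (μ : YoungDiagram) : beta μ (μ.colLen 0) = 0 := by
  have : μ.rowLen (μ.colLen 0) = 0 := by
    by_contra h
    exact (mem_iff_lt_colLen.mp (mem_iff_lt_rowLen.mpr (Nat.pos_of_ne_zero h))).false
  simp [beta, this]

lemma beta_lt_beta {i j : ℕ} (hij : i < j) (hj : j ≤ μ.colLen 0) : beta μ j < beta μ i := by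
  have := μ.rowLen_anti i j hij.le
  simp only [beta]
  omega

lemma beta_injOn (μ : YoungDiagram) : Set.InjOn (beta μ) (Iic (μ.colLen 0)) := by
  intro i hi j hj hij
  simp only [coe_Iic, Set.mem_Iic] at hi hj
  rcases lt_trichotomy i j with h | h | h
  exacts [absurd hij (beta_lt_beta h hj).ne', h, absurd hij (beta_lt_beta h hi).ne]

lemma beta_injOn_Ioc (μ : YoungDiagram) (k : ℕ) : Set.InjOn (beta μ) (Ioc k (μ.colLen 0)) :=
  (beta_injOn μ).mono fun _ hi => mem_coe.mpr (mem_Iic.mpr (mem_Ioc.mp hi).2)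

lemma image_beta_Ioc_subset_range (μ : YoungDiagram) (k : ℕ) :
    (Ioc k (μ.colLen 0)).image (beta μ) ⊆ range (beta μ k) := by
  intro x hx
  obtain ⟨i, hi, rfl⟩ := mem_image.mp hx
  exact mem_range.mpr (beta_lt_beta (mem_Ioc.mp hi).1 (mem_Ioc.mp hi).2)

lemma betaGap_strictMono (μ : YoungDiagram) : StrictMono (betaGap μ) :=
  strictMono_nat_of_lt_succ fun j => by
    have := μ.colLen_anti j (j + 1) j.le_succ
    have := μ.colLen_anti 0 j j.zero_le
    simp only [betaGap]
    omega

lemma hook_add_betaGap {k j : ℕ} (h : j < μ.rowLen k) :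
    hook μ (k, j) + betaGap μ j = beta μ k := by
  have hmem : (k, j) ∈ μ := mem_iff_lt_rowLen.mpr h
  have := hook_add_eq_rowLen_add_colLen hmem
  have := mem_iff_lt_colLen.mp hmem
  have := μ.colLen_anti 0 j j.zero_le
  simp only [beta, betaGap]
  omega

lemma image_betaGap_range (k : ℕ) :
    (range (μ.rowLen k)).image (betaGap μ) =
      range (beta μ k) \ (Ioc k (μ.colLen 0)).image (beta μ) := by
  refine eq_of_subset_of_card_le (fun x hx => ?_) ?_
  · obtain ⟨j, hj, rfl⟩ := mem_image.mp hx
    rw [mem_range] at hj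
    have hsum := hook_add_betaGap hj
    have hpos := hook_pos (mem_iff_lt_rowLen.mpr hj)
    refine mem_sdiff.mpr ⟨mem_range.mpr (by omega), fun h => ?_⟩
    obtain ⟨i, hi, hgap⟩ := mem_image.mp h
    obtain ⟨hki, hin⟩ := mem_Ioc.mp hi
    have := μ.colLen_anti 0 j j.zero_le
    by_cases hij : j < μ.rowLen i
    · have := mem_iff_lt_colLen.mp (mem_iff_lt_rowLen.mpr hij)
      simp only [beta, betaGap] at hgap
      omega
    · have : μ.colLen j ≤ i :=
        not_lt.mp fun h' => hij (mem_iff_lt_rowLen.mp (mem_iff_lt_colLen.mpr h'))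
      simp only [beta, betaGap] at hgap
      omega
  · rw [card_sdiff_of_subset (image_beta_Ioc_subset_range μ k),
      card_image_of_injOn (beta_injOn_Ioc μ k),
      card_image_of_injective _ (betaGap_strictMono μ).injective, card_range, card_range,
      Nat.card_Ioc, beta]
    omega

lemma prod_range_add_one_sub_div_sub (B : ℕ) :
    ∏ t ∈ range B, ((B : ℚ) + 1 - t) / (B - t) = B + 1 := by
  have hreflect : ∀ j ∈ range B,
      ((B : ℚ) + 1 - (B - 1 - j : ℕ)) / (B - (B - 1 - j : ℕ)) = ((j : ℚ) + 2) / (j + 1) := by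
    intro j hj
    rw [mem_range] at hj
    rw [Nat.cast_sub (by omega), Nat.cast_sub (by omega), Nat.cast_one]
    congr 1 <;> ring
  rw [← prod_range_reflect, prod_congr rfl hreflect]
  clear hreflect
  induction B with
  | zero => simp
  | succ B ih =>
    rw [prod_range_succ, ih]
    push_cast
    field_simp
    ring

lemma prod_row_hook {k : ℕ} :
    ∏ j ∈ range (μ.rowLen k), ((hook μ (k, j) : ℚ) + 1) / hook μ (k, j) =
      (beta μ k + 1) *
        (∏ i ∈ Ioc k (μ.colLen 0), ((beta μ k : ℚ) + 1 - beta μ i) / (beta μ k - beta μ i))⁻¹ := by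
  set B := beta μ k
  set G : ℕ → ℚ := fun t => ((B : ℚ) + 1 - t) / (B - t)
  have hrow : ∀ j ∈ range (μ.rowLen k),
      ((hook μ (k, j) : ℚ) + 1) / hook μ (k, j) = G (betaGap μ j) := by
    intro j hj
    have h : (B : ℚ) = hook μ (k, j) + betaGap μ j := by
      exact_mod_cast (hook_add_betaGap (mem_range.mp hj)).symm
    simp only [G, h]
    congr 1 <;> ring
  have hne : ∏ i ∈ Ioc k (μ.colLen 0), G (beta μ i) ≠ 0 := by
    refine prod_ne_zero_iff.mpr fun i hi => ?_
    have : (beta μ i : ℚ) < B := by exact_mod_cast beta_lt_beta (mem_Ioc.mp hi).1 (mem_Ioc.mp hi).2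
    exact div_ne_zero (by linarith) (by linarith)
  have hsplit := prod_sdiff (f := G) (image_beta_Ioc_subset_range μ k)
  rw [prod_range_add_one_sub_div_sub, prod_image (beta_injOn_Ioc μ k)] at hsplit
  rw [prod_congr rfl hrow, ← prod_image fun _ _ _ _ h => (betaGap_strictMono μ).injective h,
    image_betaGap_range, eq_mul_inv_iff_mul_eq₀ hne, hsplit]

lemma prod_col_hook {k m : ℕ} (hrow : μ.rowLen k = m) (hcol : μ.colLen m = k) :
    ∏ i ∈ range k, ((hook μ (i, m) : ℚ) + 1) / hook μ (i, m) =
      (∏ i ∈ range k, ((beta μ k : ℚ) + 1 - beta μ i) / (beta μ k - beta μ i))⁻¹ := by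
  rw [← prod_inv_distrib]
  refine prod_congr rfl fun i hi => ?_
  have hmem : (i, m) ∈ μ := mem_iff_lt_colLen.mpr (hcol ▸ mem_range.mp hi)
  have h : (hook μ (i, m) : ℚ) = beta μ i - beta μ k - 1 := by
    have := hook_add_eq_rowLen_add_colLen hmem
    have := mem_range.mp hi
    have := μ.colLen_anti 0 m m.zero_le
    have : hook μ (i, m) + beta μ k + 1 = beta μ i := by simp only [beta]; omega
    rw [← this]
    push_cast
    ring
  rw [h, inv_div, ← neg_div_neg_eq]
  congr 1 <;> ring

lemma one_div_H_addBox {k : ℕ} (hk : μ.colLen (μ.rowLen k) = k) :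
    1 / H (addBox μ (k, μ.rowLen k)) = 1 / H μ * (((beta μ k : ℚ) + 1)⁻¹ *
      ∏ i ∈ (Iic (μ.colLen 0)).erase k,
        ((beta μ k : ℚ) + 1 - beta μ i) / (beta μ k - beta μ i)) := by
  have hc : (k, μ.rowLen k) ∈ addables μ := mem_addables_iff.mpr ⟨rfl, hk⟩
  have hkn : k ≤ μ.colLen 0 := hk ▸ μ.colLen_anti 0 _ (Nat.zero_le _)
  have hsplit : (Iic (μ.colLen 0)).erase k = range k ∪ Ioc k (μ.colLen 0) := by
    ext i
    simp only [mem_erase, mem_Iic, mem_union, mem_range, mem_Ioc]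
    omega
  have hdisj : Disjoint (range k) (Ioc k (μ.colLen 0)) := by
    simp only [disjoint_left, mem_range, mem_Ioc]
    omega
  rw [H_addBox hc, prod_row_hook, prod_col_hook rfl hk, hsplit, prod_union hdisj]
  simp only [one_div, mul_inv, inv_inv]
  ring

-- If row `k` does not end in an addable cell, row `k - 1` has the same length.
lemma exists_beta_eq_beta_add_one {k : ℕ} (hkn : k ≤ μ.colLen 0)
    (hk : μ.colLen (μ.rowLen k) ≠ k) :
    ∃ i ∈ (Iic (μ.colLen 0)).erase k, beta μ i = beta μ k + 1 := by
  have hlt : μ.colLen (μ.rowLen k) < k := by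
    refine lt_of_le_of_ne (not_lt.mp fun h => ?_) hk
    exact (mem_iff_lt_rowLen.mp (mem_iff_lt_colLen.mpr h)).false
  have hrow : μ.rowLen (k - 1) = μ.rowLen k := by
    refine le_antisymm (not_lt.mp fun h => ?_) (μ.rowLen_anti _ _ (Nat.sub_le k 1))
    have := mem_iff_lt_colLen.mp (mem_iff_lt_rowLen.mpr h)
    omega
  refine ⟨k - 1, by simp only [mem_erase, mem_Iic]; omega, ?_⟩
  simp only [beta, hrow]
  omega

lemma sum_one_div_H_addBox (μ : YoungDiagram) :
    ∑ c ∈ addables μ, 1 / H (addBox μ c) = 1 / H μ := by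
  have haddables : addables μ = ((Iic (μ.colLen 0)).filter
      (fun k => μ.colLen (μ.rowLen k) = k)).image (fun k => (k, μ.rowLen k)) := by
    ext ⟨k, m⟩
    simp only [mem_addables_iff, mem_image, mem_filter, mem_Iic, Prod.mk.injEq]
    constructor
    · rintro ⟨hrow, hcol⟩
      exact ⟨k, ⟨hcol ▸ μ.colLen_anti 0 m m.zero_le, hrow ▸ hcol⟩, rfl, hrow⟩
    · rintro ⟨k, ⟨-, hk⟩, rfl, rfl⟩
      exact ⟨rfl, hk⟩
  rw [haddables, sum_image fun _ _ _ _ h => (Prod.mk.inj h).1,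
    sum_congr rfl fun k hk => one_div_H_addBox (mem_filter.mp hk).2, ← mul_sum, sum_filter_of_ne]
  · rw [Lagrange.sum_inv_add_one_mul_prod_div_eq_one (v := fun i => (beta μ i : ℚ))
      (Nat.cast_injective.comp_injOn (beta_injOn μ)) (mem_Iic.mpr le_rfl)
      (by simp [beta_colLen_zero]) (fun i _ => by positivity), mul_one]
  · intro k hk hne
    by_contra hcorner
    obtain ⟨i, hi, hbeta⟩ := exists_beta_eq_beta_add_one (mem_Iic.mp hk) hcorner
    refine hne (mul_eq_zero_of_right _ (prod_eq_zero hi ?_))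
    rw [hbeta, Nat.cast_succ, sub_self, zero_div]

lemma support_fskew_subset (n : ℕ) (ν : YoungDiagram) :
    Function.support (fskew n ν) ⊆ {l | ν ≤ l ∧ l.card = ν.card + n} := by
  induction n generalizing ν with
  | zero =>
    intro l hl
    rw [Function.mem_support, fskew, ne_eq, ite_eq_right_iff, not_forall] at hl
    obtain ⟨rfl, -⟩ := hl
    exact ⟨le_rfl, rfl⟩
  | succ n ih =>
    intro l hl
    obtain ⟨c, hc, hne⟩ := exists_ne_zero_of_sum_ne_zero hl
    obtain ⟨hle, hcard⟩ := ih (addBox ν c) hne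
    exact ⟨(le_addBox hc).trans hle, by rw [hcard, card_addBox hc]; omega⟩

lemma finite_setOf_card_eq (M : ℕ) : {l : YoungDiagram | l.card = M}.Finite := by
  refine Set.Finite.of_finite_image (f := YoungDiagram.cells) ?_ fun _ _ _ _ h => YoungDiagram.ext h
  refine (range M ×ˢ range M).powerset.finite_toSet.subset ?_
  rintro _ ⟨l, rfl, rfl⟩
  rw [mem_coe, mem_powerset]
  intro ⟨i, j⟩ hc
  have hmem := (mem_cells _).mp hc
  have := mem_iff_lt_rowLen.mp hmem
  have := mem_iff_lt_colLen.mp hmem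
  have := rowLen_le_card l i
  have := colLen_le_card l j
  simp only [mem_product, mem_range]
  omega

lemma finsum_fskew_div_H (n : ℕ) (ν : YoungDiagram) :
    ∑ᶠ l, (fskew n ν l : ℚ) / H l = 1 / H ν := by
  induction n generalizing ν with
  | zero =>
    rw [finsum_eq_single _ ν fun l hl => by simp [fskew, Ne.symm hl]]
    simp [fskew]
  | succ n ih =>
    have hfin : ∀ c ∈ addables ν,
        (Function.support fun l => (fskew n (addBox ν c) l : ℚ) / H l).Finite :=
      fun c _ => (finite_setOf_card_eq _).subset fun l hl =>
        (support_fskew_subset n (addBox ν c) fun h => hl (by simp [h])).2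
    simp only [fskew, Nat.cast_sum, sum_div]
    rw [finsum_sum_comm _ _ hfin, sum_congr rfl fun c _ => ih (addBox ν c), sum_one_div_H_addBox]

/-- `Σ_{|λ/μ|=n} f_{λ/μ}/H_λ = 1/H_μ`. -/
theorem sum_skew_div_H (μ : YoungDiagram) (n : ℕ) :
    (∑ᶠ l ∈ {l : YoungDiagram | μ ≤ l ∧ l.card = μ.card + n}, (fskew n μ l : ℚ) / H l)
      = 1 / H μ := by
  have hsupp : Function.support (fun l => (fskew n μ l : ℚ) / H l) ⊆
      {l | μ ≤ l ∧ l.card = μ.card + n} := fun l hl =>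
    support_fskew_subset n μ fun h => hl (by simp [h])
  rw [finsum_mem_def, Set.indicator_eq_self.mpr hsupp, finsum_fskew_div_H]

end HookDiff
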